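/- arXiv:1110.1280 — 2 statements merged into one kernel-verified Lean document; each statement's English description precedes it below -/
import Mathlib

section
/- Let H be an n×n real matrix and Λ a nonzero vector in ℝⁿ. Define the block matrix K = [[H, Λ],[Λᵀ, 0]] of size (n+1)×(n+1). Then K is invertible if and only if the following condition holds: for every r in ker(Λᵀ) (i.e., Λᵀr = 0), if sᵀHr = 0 for all s in ker(Λᵀ), then r = 0. -/
/-!
`K` is invertible iff its kernel is trivial. A kernel vector `(x, t)` of `K` satisfies `Λᵀx = 0`
and `Hx = -tΛ`, and since `Λ ≠ 0` it is nonzero iff `x` is. Finally, `Hx` is a multiple of `Λ`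
iff it is orthogonal to `ker Λᵀ`, which is the condition of the theorem.
-/

open Matrix

/-- The bordered (n+1)×(n+1) saddle-point matrix K = [[H, Λ],[Λᵀ, 0]]. -/
def borderedK {n : ℕ} (H : Matrix (Fin n) (Fin n) ℝ) (Λ : Fin n → ℝ) :
    Matrix (Fin n ⊕ Fin 1) (Fin n ⊕ Fin 1) ℝ :=
  Matrix.fromBlocks H (Matrix.of fun i _ => Λ i) (Matrix.of fun _ j => Λ j) 0

section

variable {𝕜 ι : Type*} [Field 𝕜] [Fintype ι]

theorem exists_eq_smul_of_forall_dotProduct_eq_zero {Λ v : ι → 𝕜}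
    (h : ∀ s, Λ ⬝ᵥ s = 0 → s ⬝ᵥ v = 0) : ∃ c : 𝕜, v = c • Λ := by
  classical
  by_cases hΛ : Λ = 0
  · subst hΛ
    exact ⟨0, funext fun j => by simpa using h (Pi.single j 1) (zero_dotProduct _)⟩
  obtain ⟨i, hi⟩ := Function.ne_iff.1 hΛ
  refine ⟨v i / Λ i, funext fun j => ?_⟩
  have := h (Λ i • Pi.single j 1 - Λ j • Pi.single i 1) (by simp [dotProduct_sub, mul_comm])
  simp only [sub_dotProduct, smul_dotProduct, single_one_dotProduct, smul_eq_mul] at this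
  rw [Pi.smul_apply, smul_eq_mul, div_mul_eq_mul_div, eq_div_iff hi]
  linear_combination this

theorem forall_dotProduct_eq_zero_iff_exists_eq_smul {Λ v : ι → 𝕜} :
    (∀ s, Λ ⬝ᵥ s = 0 → s ⬝ᵥ v = 0) ↔ ∃ c : 𝕜, v = c • Λ := by
  refine ⟨exists_eq_smul_of_forall_dotProduct_eq_zero, ?_⟩
  rintro ⟨c, rfl⟩ s hs
  rw [dotProduct_smul, dotProduct_comm, hs, smul_zero]

end

section

variable {n : ℕ} {H : Matrix (Fin n) (Fin n) ℝ} {Λ : Fin n → ℝ}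

theorem borderedK_mulVec (u : Fin n ⊕ Fin 1 → ℝ) :
    borderedK H Λ *ᵥ u =
      Sum.elim (H *ᵥ (u ∘ Sum.inl) + u (Sum.inr 0) • Λ) fun _ => Λ ⬝ᵥ (u ∘ Sum.inl) := by
  rw [borderedK, ← Sum.elim_comp_inl_inr u, fromBlocks_mulVec]
  ext (i | j) <;> simp [mulVec, dotProduct, mul_comm]

theorem exists_borderedK_mulVec_eq_zero_iff (hΛ : Λ ≠ 0) :
    (∃ u ≠ 0, borderedK H Λ *ᵥ u = 0) ↔ ∃ r ≠ 0, Λ ⬝ᵥ r = 0 ∧ ∃ c : ℝ, H *ᵥ r = c • Λ := by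
  constructor
  · rintro ⟨u, hu0, hu⟩
    rw [borderedK_mulVec] at hu
    have htop : H *ᵥ (u ∘ Sum.inl) + u (Sum.inr 0) • Λ = 0 := congrArg (· ∘ Sum.inl) hu
    have hbot : Λ ⬝ᵥ (u ∘ Sum.inl) = 0 := congrFun hu (Sum.inr 0)
    refine ⟨u ∘ Sum.inl, fun hx => hu0 ?_, hbot, -u (Sum.inr 0), ?_⟩
    · rw [hx, mulVec_zero, zero_add, smul_eq_zero] at htop
      ext (i | j)
      · exact congrFun hx i
      · rw [Fin.fin_one_eq_zero j]
        exact htop.resolve_right hΛ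
    · rw [neg_smul, ← add_eq_zero_iff_eq_neg, htop]
  · rintro ⟨r, hr0, hr, c, hc⟩
    refine ⟨Sum.elim r fun _ => -c, fun h => hr0 (by simpa using congrArg (· ∘ Sum.inl) h), ?_⟩
    rw [borderedK_mulVec]
    ext (i | j) <;> simp [hr, hc]

end

theorem stmt_0 (n : ℕ) (H : Matrix (Fin n) (Fin n) ℝ) (Λ : Fin n → ℝ) (hΛ : Λ ≠ 0) :
    IsUnit (borderedK H Λ) ↔
      ∀ r : Fin n → ℝ, Λ ⬝ᵥ r = 0 →
        (∀ s : Fin n → ℝ, Λ ⬝ᵥ s = 0 → s ⬝ᵥ H.mulVec r = 0) → r = 0 := by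
  rw [isUnit_iff_isUnit_det, isUnit_iff_ne_zero, Ne, ← exists_mulVec_eq_zero_iff,
    exists_borderedK_mulVec_eq_zero_iff hΛ]
  simp_rw [forall_dotProduct_eq_zero_iff_exists_eq_smul]
  simp only [not_exists, not_and]
  exact forall_congr' fun r => by tauto
end

section
/- Let H be a symmetric positive semidefinite n×n real matrix and Λ a nonzero vector in ℝⁿ. Then the bordered matrix K = [[H, Λ],[Λᵀ, 0]] is invertible if and only if ker(H) ∩ ker(Λᵀ) = {0}. -/
open Matrix

/-! A kernel vector `(v, t)` of `K` satisfies `H v = -t Λ` and `Λ ⬝ v = 0`, so `vᵀ H v = 0`;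
positive semidefiniteness then forces `H v = 0`, hence `t Λ = 0` and `t = 0`. Thus `K` is
injective exactly when no nonzero `v` lies in `ker H ∩ ker Λᵀ`. -/

lemma Matrix.isUnit_iff_forall_mulVec_eq_zero {m K : Type*} [Fintype m] [DecidableEq m] [Field K]
    {A : Matrix m m K} : IsUnit A ↔ ∀ w, A *ᵥ w = 0 → w = 0 :=
  mulVec_injective_iff_isUnit.symm.trans (injective_iff_map_eq_zero A.mulVecLin)

section Bordered

variable {n : ℕ} (H : Matrix (Fin n) (Fin n) ℝ) (Λ : Fin n → ℝ)

lemma borderedK_mulVec_sumElim (v : Fin n → ℝ) (u : Fin 1 → ℝ) :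
    borderedK H Λ *ᵥ Sum.elim v u = Sum.elim (H *ᵥ v + u 0 • Λ) (fun _ => Λ ⬝ᵥ v) := by
  rw [borderedK, fromBlocks_mulVec]
  congr 1 <;> ext i <;> simp [mulVec, dotProduct, mul_comm]

variable {H Λ}

lemma borderedK_mulVec_sumElim_eq_zero_iff (hH : H.PosSemidef) (hΛ : Λ ≠ 0)
    (v : Fin n → ℝ) (u : Fin 1 → ℝ) :
    borderedK H Λ *ᵥ Sum.elim v u = 0 ↔ H *ᵥ v = 0 ∧ Λ ⬝ᵥ v = 0 ∧ u = 0 := by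
  simp only [borderedK_mulVec_sumElim, funext_iff, Sum.forall, Sum.elim_inl, Sum.elim_inr,
    Pi.zero_apply, Fin.forall_fin_one, forall_const]
  refine ⟨fun ⟨hker, hΛv⟩ => ?_, fun ⟨hHv, hΛv, hu⟩ => ⟨fun i => by simp [hHv, hu], hΛv⟩⟩
  have hHv_eq : H *ᵥ v = -u 0 • Λ := by
    rw [neg_smul, eq_neg_iff_add_eq_zero]; exact funext hker
  have hHv : H *ᵥ v = 0 := by
    rw [← hH.dotProduct_mulVec_zero_iff, star_trivial, hHv_eq, dotProduct_smul, dotProduct_comm,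
      hΛv, smul_zero]
  have hu : u 0 • Λ = 0 := by simpa [hHv] using hHv_eq.symm
  exact ⟨congrFun hHv, hΛv, (smul_eq_zero.1 hu).resolve_right hΛ⟩

end Bordered

theorem stmt_2 (n : ℕ) (H : Matrix (Fin n) (Fin n) ℝ) (Λ : Fin n → ℝ) (hΛ : Λ ≠ 0)
    (hsym : H.transpose = H) (hpsd : ∀ v : Fin n → ℝ, 0 ≤ v ⬝ᵥ H.mulVec v) :
    IsUnit (borderedK H Λ) ↔
      ∀ v : Fin n → ℝ, H.mulVec v = 0 → Λ ⬝ᵥ v = 0 → v = 0 := by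
  have hH : H.PosSemidef :=
    .of_dotProduct_mulVec_nonneg (by simpa [IsHermitian] using hsym) fun v => by simpa using hpsd v
  rw [isUnit_iff_forall_mulVec_eq_zero]
  constructor
  · intro hK v hHv hΛv
    have hw := hK (Sum.elim v 0) ((borderedK_mulVec_sumElim_eq_zero_iff hH hΛ v 0).2 ⟨hHv, hΛv, rfl⟩)
    simpa using congrArg (· ∘ Sum.inl) hw
  · intro hker w hw
    rw [← Sum.elim_comp_inl_inr w, borderedK_mulVec_sumElim_eq_zero_iff hH hΛ] at hw
    obtain ⟨hHv, hΛv, hu⟩ := hw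
    rw [← Sum.elim_comp_inl_inr w, hker _ hHv hΛv, hu, Sum.elim_zero_zero]
end
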